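/- arXiv:2503.20931 — 2 statements merged into one kernel-verified Lean document; each statement's English description precedes it below -/
import Mathlib

section
/- For every function f : X → ℝ∪{±∞} one has (eco f)^c = f^c, and for every function k : W → ℝ∪{±∞} one has (e'co k)^{c'} = k^{c'}, where e'co k denotes the largest e'-convex minorant of k. -/
open scoped Pointwise

noncomputable section

variable {X : Type*} [AddCommGroup X] [Module ℝ X] [TopologicalSpace X]

/-- `Wsp X` is the parameter space `X* × X* × ℝ` used in the `c`-conjugation scheme. -/
abbrev Wsp (X : Type*) [AddCommGroup X] [Module ℝ X] [TopologicalSpace X] :=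
  (X →L[ℝ] ℝ) × (X →L[ℝ] ℝ) × ℝ

/-- The coupling function `c(x,(x*,y*,α)) = ⟨x,x*⟩` if `⟨x,y*⟩ < α`, `+∞` otherwise. -/
def coupling (x : X) (w : Wsp X) : EReal :=
  if w.2.1 x < w.2.2 then ((w.1 x : ℝ) : EReal) else ⊤

/-- The `c`-conjugate of `f : X → ℝ∪{±∞}`.  (EReal subtraction gives priority to `-∞`.) -/
def cConj (f : X → EReal) : Wsp X → EReal :=
  fun w => ⨆ x : X, coupling x w - f x

/-- The `c'`-conjugate of `k : W → ℝ∪{±∞}`. -/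
def cConj' (k : Wsp X → EReal) : X → EReal :=
  fun x => ⨆ w : Wsp X, coupling x w - k w

/-- Epigraph of an extended-real-valued function, as a subset of `Y × ℝ`. -/
def epiE {Y : Type*} (f : Y → EReal) : Set (Y × ℝ) :=
  {p | f p.1 ≤ (p.2 : EReal)}

/-- A set `C` is evenly convex (e-convex) if every point outside `C` can be strictly
separated from `C` by a continuous linear functional. -/
def EConvexSet {Y : Type*} [AddCommGroup Y] [Module ℝ Y] [TopologicalSpace Y]
    (C : Set Y) : Prop :=
  ∀ x₀ ∉ C, ∃ φ : Y →L[ℝ] ℝ, ∀ x ∈ C, φ x < φ x₀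

/-- A function is e-convex if its epigraph is an e-convex subset of `X × ℝ`. -/
def EConvexFn (f : X → EReal) : Prop := EConvexSet (epiE f)

/-- The e-convex hull of a function: its largest e-convex minorant. -/
def eco (f : X → EReal) : X → EReal :=
  fun x => ⨆ g : {g : X → EReal // EConvexFn g ∧ g ≤ f}, g.1 x

/-- A function `k : W → ℝ∪{±∞}` is e'-convex if it is the pointwise supremum of a family
of functions of the form `w ↦ c(x,w) - β` with `x ∈ X`, `β ∈ ℝ`. -/
def E'ConvexFn (k : Wsp X → EReal) : Prop :=
  ∃ S : Set (X × ℝ), k = fun w => ⨆ p ∈ S, (coupling p.1 w - ((p.2 : ℝ) : EReal))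

/-- The e'-convex hull of a function: its largest e'-convex minorant. -/
def e'co (k : Wsp X → EReal) : Wsp X → EReal :=
  fun w => ⨆ g : {g : Wsp X → EReal // E'ConvexFn g ∧ g ≤ k}, g.1 w

/-- A subset of `W × ℝ` is e'-convex if it is the epigraph of an e'-convex function. -/
def E'ConvexSet (D : Set (Wsp X × ℝ)) : Prop :=
  ∃ k : Wsp X → EReal, E'ConvexFn k ∧ D = epiE k

/-- The e'-convex hull of a set: the smallest e'-convex set containing it. -/
def e'coSet (D : Set (Wsp X × ℝ)) : Set (Wsp X × ℝ) :=
  ⋂₀ {E : Set (Wsp X × ℝ) | E'ConvexSet E ∧ D ⊆ E}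

/-- A function is proper if it never takes the value `-∞` and is not identically `+∞`. -/
def ProperFn {Y : Type*} (f : Y → EReal) : Prop :=
  (∀ x, f x ≠ ⊥) ∧ ∃ x, f x ≠ ⊤

/-- Convexity of an extended-real-valued function, via convexity of its epigraph. -/
def ConvexFn (f : X → EReal) : Prop := Convex ℝ (epiE f)

open Classical in
/-- Indicator function: `0` on `D`, `+∞` elsewhere. -/
def indicatorE {Y : Type*} (D : Set Y) : Y → EReal :=
  fun x => if x ∈ D then 0 else ⊤

/-- The `ε`-`c`-subdifferential of `f` at `xb`; empty if `f xb ∉ ℝ`. -/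
def cSubdiff (f : X → EReal) (ε : ℝ) (xb : X) : Set (Wsp X) :=
  {w | (∃ r : ℝ, f xb = (r : EReal)) ∧ w.2.1 xb < w.2.2 ∧
    ∀ x : X, coupling x w - coupling xb w - (ε : EReal) ≤ f x - f xb}

/-- The e-affine function with parameters `(x', y', α, β)`. -/
def eAffine (x' y' : X →L[ℝ] ℝ) (α β : ℝ) : X → EReal :=
  fun x => if y' x < α then ((x' x - β : ℝ) : EReal) else ⊤

/-- A function is e-affine if it equals `eAffine x' y' α β` for some parameters. -/
def IsEAffine (a : X → EReal) : Prop :=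
  ∃ x' y' α β, a = eAffine x' y' α β

/-- The set `Ẽ_{f₁,f₂}` of e-affine functions obtained by adding the parameters of an
e-affine minorant of `f₁` and one of `f₂`. -/
def ETilde (f₁ f₂ : X → EReal) : Set (X → EReal) :=
  {a | ∃ x₁ y₁ : X →L[ℝ] ℝ, ∃ α₁ β₁ : ℝ, ∃ x₂ y₂ : X →L[ℝ] ℝ, ∃ α₂ β₂ : ℝ,
    eAffine x₁ y₁ α₁ β₁ ≤ f₁ ∧ eAffine x₂ y₂ α₂ β₂ ≤ f₂ ∧
    a = eAffine (x₁ + x₂) (y₁ + y₂) (α₁ + α₂) (β₁ + β₂)}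

/-- The additivity condition (AC): `eco (f₁ + f₂) = sup {a : a ∈ Ẽ_{f₁,f₂}}`. -/
def ACcond (f₁ f₂ : X → EReal) : Prop :=
  eco (fun x => f₁ x + f₂ x) = fun x => ⨆ a ∈ ETilde f₁ f₂, a x

/-- Infimal convolution of two functions on `W`. -/
def infConv (k₁ k₂ : Wsp X → EReal) : Wsp X → EReal :=
  fun w => ⨅ w' : Wsp X, k₁ w' + k₂ (w - w')

/-- The DC objective `f - g`, defined to be `+∞` outside `dom f`. -/
def dcDiff (f g : X → EReal) : X → EReal :=
  fun x => if f x = ⊤ then ⊤ else f x - g x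

/-- `λh := Σ_{t∈T} λ_t h_t` for a nonnegative generalized finite sequence `λ`. -/
def lamh {T : Type*} (lam : T →₀ ℝ) (h : T → X → EReal) : X → EReal :=
  fun x => ∑ t ∈ lam.support, ((lam t : ℝ) : EReal) * h t x

/-- The set `B := ∩_{λ∈ℝ^{(T)}_+} {x : (eco λh)(x) ≤ 0}`. -/
def Bset {T : Type*} (h : T → X → EReal) : Set X :=
  {x | ∀ lam : T →₀ ℝ, (∀ t, 0 ≤ lam t) → eco (lamh lam h) x ≤ 0}

/-- The set `K := ∪_{λ∈ℝ^{(T)}_+} epi (λh)^c`. -/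
def Kset {T : Type*} (h : T → X → EReal) : Set (Wsp X × ℝ) :=
  ⋃ lam ∈ {l : T →₀ ℝ | ∀ t, 0 ≤ l t}, epiE (cConj (lamh lam h))

/-! Every elementary function `x ↦ c(x,w) - β` is e-convex and every `w ↦ c(x,w) - β` is
e'-convex, so each elementary minorant of `f` (resp. `k`) already lies below its hull. Since the
conjugate at `w` is at most `β` exactly when the elementary function with parameters `(w, β)`
is a minorant, passing to the hull does not change the conjugate. -/

theorem EReal.sub_le_coe_comm {a b : EReal} {β : ℝ} : a - b ≤ β ↔ a - β ≤ b := by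
  have hβ : a - β ≤ b ↔ a ≤ b + β :=
    EReal.sub_le_iff_le_add (.inl (EReal.coe_ne_bot β)) (.inl (EReal.coe_ne_top β))
  rw [hβ, add_comm]
  exact ⟨fun h => (EReal.sub_le_iff_le_add (.inr (EReal.coe_ne_top β))
    (.inr (EReal.coe_ne_bot β))).1 h, EReal.sub_le_of_le_add⟩

theorem iSup_sub_le_coe_iff {ι : Type*} (c f : ι → EReal) (β : ℝ) :
    ⨆ i, c i - f i ≤ β ↔ ∀ i, c i - β ≤ f i := by
  simp only [iSup_le_iff, EReal.sub_le_coe_comm]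

theorem iSup_sub_eq_of_le_of_forall_sub_coe_le {ι : Type*} {c f g : ι → EReal} (hgf : g ≤ f)
    (hg : ∀ β : ℝ, (∀ i, c i - β ≤ f i) → ∀ i, c i - β ≤ g i) :
    ⨆ i, c i - g i = ⨆ i, c i - f i := by
  refine le_antisymm ?_ (iSup_mono fun i => EReal.sub_le_sub le_rfl (hgf i))
  refine EReal.le_of_forall_lt_iff_le.1 fun β hβ => ?_
  exact (iSup_sub_le_coe_iff c g β).2 (hg β ((iSup_sub_le_coe_iff c f β).1 hβ.le))

theorem coupling_sub_coe_le_iff {x : X} {w : Wsp X} {β t : ℝ} :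
    coupling x w - β ≤ t ↔ w.2.1 x < w.2.2 ∧ w.1 x - β ≤ t := by
  unfold coupling
  split_ifs with h
  · rw [← EReal.coe_sub, EReal.coe_le_coe_iff]
    exact (and_iff_right h).symm
  · simp [h]

theorem eConvexFn_coupling_sub (w : Wsp X) (β : ℝ) :
    EConvexFn (fun x => coupling x w - β) := by
  rintro ⟨x₀, t₀⟩ hp₀
  simp only [epiE, Set.mem_ofPred_eq, coupling_sub_coe_le_iff, not_and_or, not_lt, not_le] at hp₀
  rcases hp₀ with hy | hx
  · refine ⟨w.2.1.comp (ContinuousLinearMap.fst ℝ X ℝ), fun p hp => ?_⟩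
    simp only [epiE, Set.mem_ofPred_eq, coupling_sub_coe_le_iff] at hp
    exact hp.1.trans_le hy
  · refine ⟨w.1.comp (ContinuousLinearMap.fst ℝ X ℝ) - ContinuousLinearMap.snd ℝ X ℝ,
      fun p hp => ?_⟩
    simp only [epiE, Set.mem_ofPred_eq, coupling_sub_coe_le_iff] at hp
    simp only [sub_apply, ContinuousLinearMap.comp_apply,
      ContinuousLinearMap.coe_fst', ContinuousLinearMap.coe_snd']
    linarith [hp.2]

theorem e'ConvexFn_coupling_sub (x : X) (β : ℝ) :
    E'ConvexFn (fun w : Wsp X => coupling x w - β) :=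
  ⟨{(x, β)}, by simp⟩

theorem eco_le (f : X → EReal) : eco f ≤ f :=
  fun x => iSup_le fun g => g.2.2 x

theorem le_eco {f g : X → EReal} (hg : EConvexFn g) (hgf : g ≤ f) : g ≤ eco f :=
  fun x => le_iSup (fun g : {g : X → EReal // EConvexFn g ∧ g ≤ f} => g.1 x) ⟨g, hg, hgf⟩

theorem e'co_le (k : Wsp X → EReal) : e'co k ≤ k :=
  fun w => iSup_le fun g => g.2.2 w

theorem le_e'co {k g : Wsp X → EReal} (hg : E'ConvexFn g) (hgk : g ≤ k) : g ≤ e'co k :=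
  fun w => le_iSup (fun g : {g : Wsp X → EReal // E'ConvexFn g ∧ g ≤ k} => g.1 w) ⟨g, hg, hgk⟩

theorem cConj_eco (f : X → EReal) : cConj (eco f) = cConj f :=
  funext fun w => iSup_sub_eq_of_le_of_forall_sub_coe_le (eco_le f)
    fun β hβ => le_eco (eConvexFn_coupling_sub w β) hβ

theorem cConj'_e'co (k : Wsp X → EReal) : cConj' (e'co k) = cConj' k :=
  funext fun x => iSup_sub_eq_of_le_of_forall_sub_coe_le (e'co_le k)
    fun β hβ => le_e'co (e'ConvexFn_coupling_sub x β) hβ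

theorem stmt0_general
    (f : X → EReal) (k : Wsp X → EReal) :
    cConj (eco f) = cConj f ∧ cConj' (e'co k) = cConj' k :=
  ⟨cConj_eco f, cConj'_e'co k⟩

/-- `(eco f)^c = f^c` and `(e'co k)^{c'} = k^{c'}`. -/
theorem stmt0 [IsTopologicalAddGroup X] [ContinuousSMul ℝ X] [LocallyConvexSpace ℝ X] [T2Space X]
    (f : X → EReal) (k : Wsp X → EReal) :
    cConj (eco f) = cConj f ∧ cConj' (e'co k) = cConj' k :=
  stmt0_general f k

end
end

section
/- Let f, g : X → ℝ∪{±∞} be proper functions with g e-convex and dom f ⊆ dom g. Then E_{f−g} ⊆ E_f − E_g, i.e. every e-affine minorant a of f − g can be written as a = a' − b with a' ∈ E_f and b ∈ E_g. -/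
open scoped Pointwise

noncomputable section

variable {X : Type*} [AddCommGroup X] [Module ℝ X] [TopologicalSpace X]

/-!
Separating a point strictly below the graph of the e-convex function `g` from its epigraph gives
a functional with negative vertical component, i.e. a finite-valued continuous affine minorant
`b` of `g`. As `g` is finite on `dom f`, `a + b` is then an e-affine minorant of `f`, and since
`b` is finite, `a = (a + b) - b`.
-/

open ContinuousLinearMap

theorem eAffine_add_apply (x' y' φ : X →L[ℝ] ℝ) (α β γ : ℝ) (x : X) :
    eAffine (x' + φ) y' α (β + γ) x = eAffine x' y' α β x + ((φ x - γ : ℝ) : EReal) := by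
  unfold eAffine
  split_ifs
  · rw [← EReal.coe_add, EReal.coe_eq_coe_iff, add_apply]
    ring
  · rw [EReal.top_add_coe]

theorem eAffine_zero_one_apply (φ : X →L[ℝ] ℝ) (γ : ℝ) (x : X) :
    eAffine φ 0 1 γ x = ((φ x - γ : ℝ) : EReal) := by
  simp [eAffine]

theorem EConvexFn.exists_affine_minorant {g : X → EReal} (hg : EConvexFn g) {x₀ : X} {r : ℝ}
    (hx₀ : g x₀ = r) : ∃ (φ : X →L[ℝ] ℝ) (γ : ℝ), ∀ x, ((φ x - γ : ℝ) : EReal) ≤ g x := by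
  have hout : (x₀, r - 1) ∉ epiE g := by
    change ¬g x₀ ≤ ((r - 1 : ℝ) : EReal)
    rw [hx₀, EReal.coe_le_coe_iff]
    linarith
  obtain ⟨ψ, hψ⟩ := hg _ hout
  set u : X →L[ℝ] ℝ := ψ.comp (inl ℝ X ℝ)
  set c : ℝ := ψ (0, 1)
  have hψ_apply (x : X) (t : ℝ) : ψ (x, t) = u x + t * c := by
    rw [← ψ.comp_inl_add_comp_inr (x, t), comp_apply, comp_apply, inr_apply,
      ← smul_eq_mul, ← map_smul, Prod.smul_mk, smul_zero, smul_eq_mul, mul_one]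
  have hc : c < 0 := by
    have := hψ (x₀, r) hx₀.le
    rw [hψ_apply, hψ_apply] at this
    linarith
  set K : ℝ := ψ (x₀, r - 1)
  refine ⟨-c⁻¹ • u, -(K / c), fun x => EReal.le_of_forall_lt_iff_le.1 fun s hs => ?_⟩
  have hsep := hψ (x, s) hs.le
  rw [hψ_apply] at hsep
  have hval : (-c⁻¹ • u) x - -(K / c) = (K - u x) / c := by
    rw [smul_apply, smul_eq_mul]
    ring
  rw [EReal.coe_le_coe_iff, hval, div_le_iff_of_neg hc]
  linarith

theorem add_le_of_le_dcDiff {Y : Type*} {f g : Y → EReal} {y : Y} {a : EReal} {b : ℝ}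
    (ha : a ≤ dcDiff f g y) (hb : (b : EReal) ≤ g y) (hg : g y ≠ ⊥) (hdom : f y ≠ ⊤ → g y ≠ ⊤) :
    a + b ≤ f y := by
  by_cases hfy : f y = ⊤
  · simp [hfy]
  replace ha : a ≤ f y - g y := by simpa [dcDiff, hfy] using ha
  lift g y to ℝ using ⟨hdom hfy, hg⟩ with t
  calc a + b ≤ (f y - t) + t := add_le_add ha hb
    _ = f y := EReal.sub_add_cancel

theorem stmt5_general
    (f g : X → EReal) (hgp : ProperFn g) (hge : EConvexFn g)
    (hdom : {x : X | f x ≠ ⊤} ⊆ {x : X | g x ≠ ⊤}) :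
    ∀ a : X → EReal, IsEAffine a → a ≤ dcDiff f g →
      ∃ a' b : X → EReal, IsEAffine a' ∧ a' ≤ f ∧ IsEAffine b ∧ b ≤ g ∧
        ∀ x : X, a x = a' x - b x := by
  rintro a ⟨x', y', α, β, rfl⟩ ha
  obtain ⟨x₀, hx₀⟩ := hgp.2
  obtain ⟨φ, γ, hb⟩ := hge.exists_affine_minorant (EReal.coe_toReal hx₀ (hgp.1 x₀)).symm
  refine ⟨eAffine (x' + φ) y' α (β + γ), eAffine φ 0 1 γ, ⟨_, _, _, _, rfl⟩, fun x => ?_,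
    ⟨_, _, _, _, rfl⟩, fun x => ?_, fun x => ?_⟩
  · rw [eAffine_add_apply]
    exact add_le_of_le_dcDiff (ha x) (hb x) (hgp.1 x) (@hdom x)
  · rw [eAffine_zero_one_apply]
    exact hb x
  · rw [eAffine_zero_one_apply, eAffine_add_apply, EReal.add_sub_cancel_right]

/-- `E_{f-g} ⊆ E_f - E_g` when `g` is e-convex and `dom f ⊆ dom g`. -/
theorem stmt5 [IsTopologicalAddGroup X] [ContinuousSMul ℝ X] [LocallyConvexSpace ℝ X] [T2Space X]
    (f g : X → EReal) (hfp : ProperFn f) (hgp : ProperFn g) (hge : EConvexFn g)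
    (hdom : {x : X | f x ≠ ⊤} ⊆ {x : X | g x ≠ ⊤}) :
    ∀ a : X → EReal, IsEAffine a → a ≤ dcDiff f g →
      ∃ a' b : X → EReal, IsEAffine a' ∧ a' ≤ f ∧ IsEAffine b ∧ b ≤ g ∧
        ∀ x : X, a x = a' x - b x :=
  stmt5_general f g hgp hge hdom

end
end
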